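/- arXiv:math/0407003 — 11 statements merged into one kernel-verified Lean document; each statement's English description precedes it below -/
import Mathlib

section
/- Let I be an ideal of A, and let ψ₁, ψ₂ : G → A/I be monoid homomorphisms (characters) such that for every g ∈ G one has tr ρ(g) ≡ ψ₁(g) + ψ₂(g) (mod I), and such that ψ₁(s) and ψ₂(s) are the images of λ₁ and λ₂ in A/I respectively. Then for all g, g′ ∈ G: a(g) − ψ₁(g) ∈ I (i.e. a(g) ≡ ψ₁(g) mod I), d(g) − ψ₂(g) ∈ I, and b(g)·c(g′) ∈ I. -/
/-!
Reducing modulo `I`, it suffices to treat the case `I = 0`, where `tr ρ = ψ₁ + ψ₂` exactly.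
Comparing the traces of `ρ g` and `ρ (s g)` gives `(λ₁ - λ₂) (a g - ψ₁ g) = 0`, so `a = ψ₁` and
then `d = ψ₂`. With the diagonal known, the traces of `ρ (g g')` and `ρ (g s g')` give
`b g c g' + c g b g' = 0` and `λ₂ b g c g' + λ₁ c g b g' = 0`, whence `(λ₁ - λ₂) b g c g' = 0`.
-/

namespace Matrix

variable {R : Type*} [CommRing R]

theorem trace_mul_fin_two (M N : Matrix (Fin 2) (Fin 2) R) :
    trace (M * N) = M 0 0 * N 0 0 + M 0 1 * N 1 0 + M 1 0 * N 0 1 + M 1 1 * N 1 1 := by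
  simp only [trace_fin_two, mul_apply, Fin.sum_univ_two]
  ring

theorem trace_mul_mul_fin_two_of_diag (M D N : Matrix (Fin 2) (Fin 2) R)
    (h01 : D 0 1 = 0) (h10 : D 1 0 = 0) :
    trace (M * D * N) = M 0 0 * D 0 0 * N 0 0 + M 0 1 * D 1 1 * N 1 0 +
      M 1 0 * D 0 0 * N 0 1 + M 1 1 * D 1 1 * N 1 1 := by
  simp only [trace_fin_two, mul_apply, Fin.sum_univ_two, h01, h10]
  ring

end Matrix

section TraceOfCharacters

variable {R G : Type*} [CommRing R] [Monoid G]
  (ρ : G →* Matrix (Fin 2) (Fin 2) R) (ψ₁ ψ₂ : G →* R) (s : G)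
  (h01 : ρ s 0 1 = 0) (h10 : ρ s 1 0 = 0) (hreg : IsLeftRegular (ρ s 0 0 - ρ s 1 1))
  (htr : ∀ g, Matrix.trace (ρ g) = ψ₁ g + ψ₂ g)
  (hs1 : ψ₁ s = ρ s 0 0) (hs2 : ψ₂ s = ρ s 1 1)
include h01 h10 hreg htr hs1 hs2

theorem entry_zero_zero_eq_of_trace_eq_add (g : G) : ρ g 0 0 = ψ₁ g := by
  have hg := htr g
  have hsg := htr (s * g)
  rw [Matrix.trace_fin_two] at hg
  rw [map_mul, map_mul, map_mul, Matrix.trace_mul_fin_two, h01, h10, hs1, hs2] at hsg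
  refine sub_eq_zero.mp (hreg ?_)
  linear_combination hsg - ρ s 1 1 * hg

theorem entry_one_one_eq_of_trace_eq_add (g : G) : ρ g 1 1 = ψ₂ g := by
  have hg := htr g
  rw [Matrix.trace_fin_two,
    entry_zero_zero_eq_of_trace_eq_add ρ ψ₁ ψ₂ s h01 h10 hreg htr hs1 hs2] at hg
  exact add_left_cancel hg

theorem entry_zero_one_mul_entry_one_zero_eq_zero_of_trace_eq_add (g g' : G) :
    ρ g 0 1 * ρ g' 1 0 = 0 := by
  have ha := entry_zero_zero_eq_of_trace_eq_add ρ ψ₁ ψ₂ s h01 h10 hreg htr hs1 hs2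
  have hd := entry_one_one_eq_of_trace_eq_add ρ ψ₁ ψ₂ s h01 h10 hreg htr hs1 hs2
  have hgg' := htr (g * g')
  have hgsg' := htr (g * s * g')
  rw [map_mul, map_mul, map_mul, Matrix.trace_mul_fin_two, ha g, ha g', hd g, hd g'] at hgg'
  rw [map_mul, map_mul, map_mul, map_mul, map_mul, map_mul,
    Matrix.trace_mul_mul_fin_two_of_diag _ _ _ h01 h10, ha g, ha g', hd g, hd g', hs1, hs2] at hgsg'
  refine hreg.eq_iff.mp ?_
  linear_combination ρ s 0 0 * hgg' - hgsg'

end TraceOfCharacters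

/-- Let `A` be a commutative ring, `G` a group and `ρ : G → GL₂(A)` a
representation, with matrix entries `a g = ρ g 0 0`, `b g = ρ g 0 1`, `c g = ρ g 1 0`,
`d g = ρ g 1 1`.  Fix `s ∈ G` with `ρ s` diagonal, whose diagonal entries `λ₁, λ₂` satisfy
that `λ₁ - λ₂` is a unit.  Let `I` be an ideal of `A` and `ψ₁ ψ₂ : G → A/I` characters
(monoid homomorphisms) with `tr ρ(g) ≡ ψ₁ g + ψ₂ g (mod I)` for all `g`, and with `ψ₁ s`,
`ψ₂ s` the images of `λ₁`, `λ₂`.  Then for all `g, g' ∈ G` we have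
`a g ≡ ψ₁ g`, `d g ≡ ψ₂ g (mod I)` and `b g * c g' ∈ I`. -/
theorem stmt_1 {A : Type*} [CommRing A] {G : Type*} [Group G]
    (ρ : G →* Matrix (Fin 2) (Fin 2) A)
    (s : G) (h01 : ρ s 0 1 = 0) (h10 : ρ s 1 0 = 0)
    (hunit : IsUnit (ρ s 0 0 - ρ s 1 1))
    (I : Ideal A) (ψ₁ ψ₂ : G →* A ⧸ I)
    (htr : ∀ g : G, Ideal.Quotient.mk I (Matrix.trace (ρ g)) = ψ₁ g + ψ₂ g)
    (hs1 : ψ₁ s = Ideal.Quotient.mk I (ρ s 0 0))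
    (hs2 : ψ₂ s = Ideal.Quotient.mk I (ρ s 1 1)) :
    (∀ g : G, Ideal.Quotient.mk I (ρ g 0 0) = ψ₁ g) ∧
    (∀ g : G, Ideal.Quotient.mk I (ρ g 1 1) = ψ₂ g) ∧
    (∀ g g' : G, ρ g 0 1 * ρ g' 1 0 ∈ I) := by
  set π := Ideal.Quotient.mk I
  let ρI : G →* Matrix (Fin 2) (Fin 2) (A ⧸ I) := π.mapMatrix.toMonoidHom.comp ρ
  have h01I : ρI s 0 1 = 0 := by simp [ρI, h01]
  have h10I : ρI s 1 0 = 0 := by simp [ρI, h10]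
  have hregI : IsLeftRegular (ρI s 0 0 - ρI s 1 1) := by
    simpa [ρI] using (hunit.map π).isRegular.left
  have htrI (g : G) : Matrix.trace (ρI g) = ψ₁ g + ψ₂ g := by
    rw [← htr, AddMonoidHom.map_trace]; rfl
  refine ⟨entry_zero_zero_eq_of_trace_eq_add ρI ψ₁ ψ₂ s h01I h10I hregI htrI hs1 hs2,
    entry_one_one_eq_of_trace_eq_add ρI ψ₁ ψ₂ s h01I h10I hregI htrI hs1 hs2, fun g g' => ?_⟩
  rw [← Ideal.Quotient.eq_zero_iff_mem, map_mul]
  exact entry_zero_one_mul_entry_one_zero_eq_zero_of_trace_eq_add ρI ψ₁ ψ₂ s h01I h10I hregI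
    htrI hs1 hs2 g g'
end

section
/- Let I be a proper ideal of A, and let ψ₁, ψ₂ : G → (A/I)ˣ be group homomorphisms into the units of A/I such that for every g ∈ G one has tr ρ(g) ≡ ψ₁(g) + ψ₂(g) (mod I), and such that ψ₁(s) and ψ₂(s) are the images of λ₁ and λ₂ in A/I respectively. Then there is an injective (A/I)-linear map from Hom_A(B/IB, A/I) to H¹(G, (A/I)(ψ₁ψ₂⁻¹)), where (A/I)(ψ₁ψ₂⁻¹) is the rank-one representation of G on A/I in which g acts by multiplication by ψ₁(g)ψ₂(g)⁻¹. (This cohomology group is identified with Ext¹_{(A/I)[G]}(ψ₂, ψ₁).) -/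
/-!
Modulo `I` the diagonal entries `a g`, `d g` of `ρ g` are `ψ₁ g`, `ψ₂ g`: the traces of `ρ g`
and `ρ (s * g)` give two linear equations for them whose determinant is `λ₁ - λ₂`. Hence the
identity `b (g * h) = a g * b h + b g * d h` makes `g ↦ φ (b g) * ψ₂(g)⁻¹` a 1-cocycle for
`χ = ψ₁ψ₂⁻¹`, for every `φ : B/IB → A/I`. If it is a coboundary `g ↦ (χ g - 1) x`, evaluating at
`s`, where `b s = 0` and `χ s - 1 = (λ₁ - λ₂)/λ₂` is a unit, gives `x = 0`; so `φ` kills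
every `b g`, and these generate `B`.
-/

set_option linter.unusedRCasesPattern false

/-- The rank-one representation of `G` on `k` attached to a character `χ : G → kˣ`:
`g` acts on `k` by multiplication by `χ g`. -/
noncomputable def charRep {k : Type*} [CommRing k] {G : Type*} [Group G] (χ : G →* kˣ) :
    Representation k G k where
  toFun g :=
    { toFun := fun x => (χ g : k) * x
      map_add' := fun x y => by ring
      map_smul' := fun c x => by simp [smul_eq_mul]; ring }
  map_one' := by ext x; simp
  map_mul' g h := by ext x; simp [Module.End.mul_apply, mul_assoc]

universe u

open groupCohomology

section CharRep

variable {k G : Type u} [CommRing k] [Group G]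

lemma mul_inv_mem_cocycles₁_charRep (ψ₁ ψ₂ : G →* kˣ) {β : G → k}
    (hβ : ∀ g h, β (g * h) = ψ₁ g * β h + ψ₂ h * β g) :
    (fun g => β g * ↑(ψ₂ g)⁻¹) ∈ cocycles₁ (Rep.of (charRep (ψ₁ * ψ₂⁻¹))) := by
  rw [mem_cocycles₁_iff]
  intro g h
  change β (g * h) * ↑(ψ₂ (g * h))⁻¹ = ↑((ψ₁ * ψ₂⁻¹) g) * (β h * ↑(ψ₂ h)⁻¹) + β g * ↑(ψ₂ g)⁻¹
  have hinv : ∀ g, (ψ₂ g : k) * ↑(ψ₂ g)⁻¹ = 1 := fun g => Units.mul_inv (ψ₂ g)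
  simp only [hβ, map_mul, MonoidHom.mul_apply, MonoidHom.inv_apply, mul_inv, Units.val_mul]
  linear_combination (β g * ↑(ψ₂ g)⁻¹) * hinv h

lemma eq_zero_of_mem_coboundaries₁_charRep {χ : G →* kˣ} {f : G → k}
    (hf : f ∈ coboundaries₁ (Rep.of (charRep χ))) {s : G} (hfs : f s = 0)
    (hχs : IsUnit ((χ s : k) - 1)) : f = 0 := by
  obtain ⟨x, rfl⟩ := hf
  have hx : ((χ s : k) - 1) * x = 0 := by
    rw [← hfs]
    change _ = (χ s : k) * x - x
    ring
  have hx0 : x = 0 := hχs.mul_right_eq_zero.mp hx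
  ext g
  change (χ g : k) * x - x = 0
  rw [hx0, mul_zero, sub_zero]

end CharRep

theorem eq_and_eq_of_add_eq_add_of_mul_add_mul {k : Type*} [CommRing k] {x₁ x₂ y₁ y₂ l₁ l₂ : k}
    (hsum : x₁ + x₂ = y₁ + y₂) (hweighted : l₁ * x₁ + l₂ * x₂ = l₁ * y₁ + l₂ * y₂)
    (hl : IsUnit (l₁ - l₂)) : x₁ = y₁ ∧ x₂ = y₂ := by
  have h : (l₁ - l₂) * (x₁ - y₁) = 0 := by linear_combination hweighted - l₂ * hsum
  have h₁ : x₁ = y₁ := sub_eq_zero.mp (hl.mul_right_eq_zero.mp h)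
  exact ⟨h₁, by linear_combination hsum - h₁⟩

theorem exists_injective_linearMap_H1_charRep {R M : Type*} {k G : Type u} [CommRing R]
    [CommRing k] [Algebra R k] [AddCommGroup M] [Module R M] [Group G]
    (ψ₁ ψ₂ : G →* kˣ) (a d : G → R) (β : G → M)
    (hβ : ∀ g h, β (g * h) = a g • β h + d h • β g)
    (ha : ∀ g, algebraMap R k (a g) = ψ₁ g) (hd : ∀ g, algebraMap R k (d g) = ψ₂ g)
    (hspan : Submodule.span R (Set.range β) = ⊤)
    (s : G) (hβs : β s = 0) (hs : IsUnit ((ψ₁ s : k) - ψ₂ s)) :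
    ∃ f : (M →ₗ[R] k) →ₗ[k] H1 (Rep.of (charRep (ψ₁ * ψ₂⁻¹))), Function.Injective f := by
  let L : (M →ₗ[R] k) →ₗ[k] G → k :=
    { toFun φ g := φ (β g) * ↑(ψ₂ g)⁻¹
      map_add' φ φ' := by ext; simp [add_mul]
      map_smul' c φ := by ext; simp [mul_assoc] }
  have hL : ∀ φ, L φ ∈ cocycles₁ (Rep.of (charRep (ψ₁ * ψ₂⁻¹))) := fun φ =>
    mul_inv_mem_cocycles₁_charRep ψ₁ ψ₂ fun g h => by
      simp only [hβ, map_add, map_smul, Algebra.smul_def, ha, hd]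
  refine ⟨(H1π _).hom ∘ₗ L.codRestrict _ hL, (injective_iff_map_eq_zero _).mpr fun φ hφ => ?_⟩
  have hcob := (H1π_eq_zero_iff _).mp hφ
  have hχs : IsUnit (((ψ₁ * ψ₂⁻¹) s : kˣ) - 1 : k) := by
    have h : (((ψ₁ * ψ₂⁻¹) s : kˣ) - 1 : k) = ((ψ₁ s : k) - ψ₂ s) * ↑(ψ₂ s)⁻¹ := by
      simp [sub_mul]
    exact h ▸ hs.mul (ψ₂ s)⁻¹.isUnit
  have hLφ : L φ = 0 := eq_zero_of_mem_coboundaries₁_charRep hcob (by simp [L, hβs]) hχs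
  refine LinearMap.ext_on_range hspan fun g => ?_
  simpa [L] using congrFun hLφ g

theorem stmt_2_general {A G : Type u} [CommRing A] [Group G]
    (ρ : G →* Matrix (Fin 2) (Fin 2) A)
    (s : G) (h01 : ρ s 0 1 = 0) (h10 : ρ s 1 0 = 0)
    (hunit : IsUnit (ρ s 0 0 - ρ s 1 1))
    (I : Ideal A)
    (ψ₁ ψ₂ : G →* (A ⧸ I)ˣ)
    (htr : ∀ g : G,
      Ideal.Quotient.mk I (Matrix.trace (ρ g)) = (ψ₁ g : A ⧸ I) + (ψ₂ g : A ⧸ I))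
    (hs1 : (ψ₁ s : A ⧸ I) = Ideal.Quotient.mk I (ρ s 0 0))
    (hs2 : (ψ₂ s : A ⧸ I) = Ideal.Quotient.mk I (ρ s 1 1))
    (B : Ideal A) (hB : B = Ideal.span (Set.range fun g : G => ρ g 0 1)) :
    ∃ f : ((↥B ⧸ (I • (⊤ : Submodule A ↥B))) →ₗ[A] A ⧸ I) →ₗ[A ⧸ I]
        groupCohomology.H1 (Rep.of (charRep (ψ₁ * ψ₂⁻¹))),
      Function.Injective f := by
  set π := Ideal.Quotient.mk I
  have hdiag : ∀ g, π (ρ g 0 0) = ψ₁ g ∧ π (ρ g 1 1) = ψ₂ g := fun g =>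
    eq_and_eq_of_add_eq_add_of_mul_add_mul (l₁ := π (ρ s 0 0)) (l₂ := π (ρ s 1 1))
      (by simpa [Matrix.trace_fin_two] using htr g)
      (by simpa [Matrix.trace_fin_two, Matrix.mul_apply, Fin.sum_univ_two, h01, h10, ← hs1,
        ← hs2] using htr (s * g))
      (by simpa using hunit.map π)
  have hmem : ∀ g, ρ g 0 1 ∈ B := fun g => hB ▸ Ideal.subset_span ⟨g, rfl⟩
  let b : G → B := fun g => ⟨ρ g 0 1, hmem g⟩
  have hb_mul : ∀ g h, b (g * h) = ρ g 0 0 • b h + ρ h 1 1 • b g := fun g h => by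
    ext
    simp [b, Matrix.mul_apply, Fin.sum_univ_two, mul_comm]
  refine exists_injective_linearMap_H1_charRep ψ₁ ψ₂ (fun g => ρ g 0 0) (fun g => ρ g 1 1)
    (Submodule.mkQ _ ∘ b)
    (fun g h => by simp only [Function.comp_apply, hb_mul, map_add, map_smul])
    (fun g => (hdiag g).1) (fun g => (hdiag g).2) ?_ s ?_ ?_
  · rw [Set.range_comp, Submodule.span_image,
      (Submodule.span_range_subtype_eq_top_iff B hmem).mpr hB.symm, Submodule.map_top,
      Submodule.range_mkQ]
  · rw [Function.comp_apply, show b s = 0 from Subtype.ext h01, map_zero]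
  · simpa [hs1, hs2] using hunit.map π

/-- Let `ρ : G → GL₂(A)` be a representation with `ρ s` diagonal, whose
diagonal entries `λ₁ = ρ s 0 0`, `λ₂ = ρ s 1 1` have unit difference.  Let `B` be the
ideal generated by the entries `b g = ρ g 0 1`.  Let `I` be a proper ideal and
`ψ₁, ψ₂ : G → (A/I)ˣ` characters with `tr ρ(g) ≡ ψ₁ g + ψ₂ g (mod I)` and `ψ₁ s, ψ₂ s`
the images of `λ₁, λ₂`.  Then there is an injective `(A/I)`-linear map from
`Hom_A(B/IB, A/I)` to `H¹(G, (A/I)(ψ₁ψ₂⁻¹))`. -/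
theorem stmt_2 {A G : Type u} [CommRing A] [Group G]
    (ρ : G →* Matrix (Fin 2) (Fin 2) A)
    (s : G) (h01 : ρ s 0 1 = 0) (h10 : ρ s 1 0 = 0)
    (hunit : IsUnit (ρ s 0 0 - ρ s 1 1))
    (I : Ideal A) (hI : I ≠ ⊤)
    (ψ₁ ψ₂ : G →* (A ⧸ I)ˣ)
    (htr : ∀ g : G,
      Ideal.Quotient.mk I (Matrix.trace (ρ g)) = (ψ₁ g : A ⧸ I) + (ψ₂ g : A ⧸ I))
    (hs1 : (ψ₁ s : A ⧸ I) = Ideal.Quotient.mk I (ρ s 0 0))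
    (hs2 : (ψ₂ s : A ⧸ I) = Ideal.Quotient.mk I (ρ s 1 1))
    (B : Ideal A) (hB : B = Ideal.span (Set.range fun g : G => ρ g 0 1)) :
    ∃ f : ((↥B ⧸ (I • (⊤ : Submodule A ↥B))) →ₗ[A] A ⧸ I) →ₗ[A ⧸ I]
        groupCohomology.H1 (Rep.of (charRep (ψ₁ * ψ₂⁻¹))),
      Function.Injective f :=
  stmt_2_general ρ s h01 h10 hunit I ψ₁ ψ₂ htr hs1 hs2 B hB
end

section
/- (i) The maps g ↦ a(g) mod BC and g ↦ d(g) mod BC are monoid homomorphisms (characters) ψ₁, ψ₂ : G → A/BC satisfying tr ρ(g) ≡ ψ₁(g) + ψ₂(g) (mod BC) for all g, with ψ₁(s), ψ₂(s) the images of λ₁, λ₂. (ii) Conversely, if I is any ideal of A for which there exist monoid homomorphisms ψ₁, ψ₂ : G → A/I with tr ρ(g) ≡ ψ₁(g) + ψ₂(g) (mod I) for all g ∈ G and with ψ₁(s), ψ₂(s) equal to the images of λ₁, λ₂ in A/I, then BC ⊆ I. In particular BC is the largest ideal I of A such that tr ρ mod I is the sum of two such characters (the ideal of reducibility), and the ideal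 of reducibility equals BC. -/
/-!
Mod `I`, the relation `ψ₁ + ψ₂ = tr ρ` evaluated at `g` and at `g s` gives two linear equations
for `ψ₁ g, ψ₂ g`, whose determinant `λ₂ - λ₁` is a unit; hence `ψ₁ g ≡ a g` and `ψ₂ g ≡ d g`.
Multiplicativity of `g ↦ a g mod I` then says `a (g h) - a g a h = b g c h ∈ I`. Conversely, once
all products `b g c h` lie in `I`, both `g ↦ a g` and `g ↦ d g` are multiplicative mod `I`.
-/

lemma eq_of_add_eq_add_of_mul_add_mul_eq {R : Type*} [CommRing R] {l₁ l₂ x y a d : R}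
    (hl : IsUnit (l₁ - l₂)) (h : x + y = a + d) (hs : l₁ * x + l₂ * y = l₁ * a + l₂ * d) :
    x = a := by
  have : (l₁ - l₂) * (x - a) = 0 := by linear_combination hs - l₂ * h
  exact sub_eq_zero.mp ((hl.mul_right_eq_zero).mp this)

lemma Matrix.trace_mul_of_fin_two_offDiag_eq_zero {R : Type*} [CommRing R]
    (M N : Matrix (Fin 2) (Fin 2) R) (h01 : N 0 1 = 0) (h10 : N 1 0 = 0) :
    (M * N).trace = M 0 0 * N 0 0 + M 1 1 * N 1 1 := by
  simp [Matrix.trace_fin_two, Matrix.mul_apply, Fin.sum_univ_two, h01, h10]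

lemma Ideal.span_range_mul_span_range_le_iff {R ι κ : Type*} [CommRing R] (f : ι → R)
    (f' : κ → R) (I : Ideal R) :
    Ideal.span (Set.range f) * Ideal.span (Set.range f') ≤ I ↔ ∀ i j, f i * f' j ∈ I := by
  simp [Ideal.span_mul_span, Ideal.span_le, Set.mul_subset_iff]

section

variable {A M : Type*} [CommRing A] [Monoid M] (ρ : M →* Matrix (Fin 2) (Fin 2) A)

lemma diag_mul_sub_mem {I : Ideal A} (hI : ∀ g h, ρ g 0 1 * ρ h 1 0 ∈ I) (i : Fin 2) (g h : M) :
    ρ (g * h) i i - ρ g i i * ρ h i i ∈ I := by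
  fin_cases i
  · simpa [Matrix.mul_apply, Fin.sum_univ_two] using hI g h
  · simpa [Matrix.mul_apply, Fin.sum_univ_two, mul_comm] using hI h g

def diagChar (I : Ideal A) (hI : ∀ g h, ρ g 0 1 * ρ h 1 0 ∈ I) (i : Fin 2) : M →* A ⧸ I where
  toFun g := Ideal.Quotient.mk I (ρ g i i)
  map_one' := by simp
  map_mul' g h := by
    rw [← map_mul, Ideal.Quotient.eq]
    exact diag_mul_sub_mem ρ hI i g h

lemma offDiag_mul_mem_of_char_eq_entry_zero_zero {I : Ideal A} (ψ : M →* A ⧸ I)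
    (hψ : ∀ g, ψ g = Ideal.Quotient.mk I (ρ g 0 0)) (g h : M) : ρ g 0 1 * ρ h 1 0 ∈ I := by
  have hmul : Ideal.Quotient.mk I (ρ (g * h) 0 0) =
      Ideal.Quotient.mk I (ρ g 0 0 * ρ h 0 0) := by
    rw [← hψ, map_mul, hψ, hψ, map_mul]
  have hentry : ρ (g * h) 0 0 = ρ g 0 0 * ρ h 0 0 + ρ g 0 1 * ρ h 1 0 := by
    simp [Matrix.mul_apply, Fin.sum_univ_two]
  simpa [hentry] using Ideal.Quotient.eq.mp hmul

lemma char_eq_entry_zero_zero_of_trace_eq_add {s : M} (h01 : ρ s 0 1 = 0) (h10 : ρ s 1 0 = 0)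
    (hunit : IsUnit (ρ s 0 0 - ρ s 1 1)) {I : Ideal A} (ψ₁ ψ₂ : M →* A ⧸ I)
    (htr : ∀ g, Ideal.Quotient.mk I (ρ g).trace = ψ₁ g + ψ₂ g)
    (hs1 : ψ₁ s = Ideal.Quotient.mk I (ρ s 0 0)) (hs2 : ψ₂ s = Ideal.Quotient.mk I (ρ s 1 1))
    (g : M) : ψ₁ g = Ideal.Quotient.mk I (ρ g 0 0) := by
  set q := Ideal.Quotient.mk I
  refine eq_of_add_eq_add_of_mul_add_mul_eq (l₁ := q (ρ s 0 0)) (l₂ := q (ρ s 1 1))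
    (y := ψ₂ g) (d := q (ρ g 1 1)) (by simpa using hunit.map q) ?_ ?_
  · simpa [Matrix.trace_fin_two] using (htr g).symm
  · have hgs := htr (g * s)
    rw [map_mul, Matrix.trace_mul_of_fin_two_offDiag_eq_zero _ _ h01 h10, map_mul, map_mul,
      hs1, hs2] at hgs
    simp only [map_add, map_mul] at hgs
    linear_combination hgs.symm

end

/-- With `ρ : G → GL₂(A)`, `s` diagonal with `λ₁ - λ₂` a unit, and
`B` (resp. `C`) the ideal generated by the values `b g = ρ g 0 1` (resp. `c g = ρ g 1 0`):
(i) `g ↦ a g mod BC` and `g ↦ d g mod BC` are characters `ψ₁, ψ₂ : G → A/BC` with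
`tr ρ(g) ≡ ψ₁ g + ψ₂ g (mod BC)` and `ψ₁ s, ψ₂ s` the images of `λ₁, λ₂`;
(ii) conversely for any ideal `I` admitting such a pair of characters one has `BC ⊆ I`.
Hence `BC` is the ideal of reducibility. -/
theorem stmt_3 {A : Type*} [CommRing A] {G : Type*} [Group G]
    (ρ : G →* Matrix (Fin 2) (Fin 2) A)
    (s : G) (h01 : ρ s 0 1 = 0) (h10 : ρ s 1 0 = 0)
    (hunit : IsUnit (ρ s 0 0 - ρ s 1 1))
    (B C : Ideal A)
    (hB : B = Ideal.span (Set.range fun g : G => ρ g 0 1))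
    (hC : C = Ideal.span (Set.range fun g : G => ρ g 1 0)) :
    (∃ ψ₁ ψ₂ : G →* A ⧸ (B * C),
      (∀ g : G, ψ₁ g = Ideal.Quotient.mk (B * C) (ρ g 0 0)) ∧
      (∀ g : G, ψ₂ g = Ideal.Quotient.mk (B * C) (ρ g 1 1)) ∧
      (∀ g : G, Ideal.Quotient.mk (B * C) (Matrix.trace (ρ g)) = ψ₁ g + ψ₂ g) ∧
      ψ₁ s = Ideal.Quotient.mk (B * C) (ρ s 0 0) ∧
      ψ₂ s = Ideal.Quotient.mk (B * C) (ρ s 1 1)) ∧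
    (∀ I : Ideal A, ∀ ψ₁ ψ₂ : G →* A ⧸ I,
      (∀ g : G, Ideal.Quotient.mk I (Matrix.trace (ρ g)) = ψ₁ g + ψ₂ g) →
      ψ₁ s = Ideal.Quotient.mk I (ρ s 0 0) →
      ψ₂ s = Ideal.Quotient.mk I (ρ s 1 1) →
      B * C ≤ I) := by
  have hBC : ∀ g h, ρ g 0 1 * ρ h 1 0 ∈ B * C := fun g h =>
    Ideal.mul_mem_mul (hB ▸ Ideal.subset_span ⟨g, rfl⟩) (hC ▸ Ideal.subset_span ⟨h, rfl⟩)
  refine ⟨⟨diagChar ρ (B * C) hBC 0, diagChar ρ (B * C) hBC 1,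
    fun _ => rfl, fun _ => rfl, fun g => by simp [diagChar, Matrix.trace_fin_two], rfl, rfl⟩, ?_⟩
  intro I ψ₁ ψ₂ htr hs1 hs2
  rw [hB, hC, Ideal.span_range_mul_span_range_le_iff]
  exact offDiag_mul_mem_of_char_eq_entry_zero_zero ρ ψ₁
    (char_eq_entry_zero_zero_of_trace_eq_add ρ h01 h10 hunit ψ₁ ψ₂ htr hs1 hs2)
end

section
/- Let A be a noetherian local ring whose maximal ideal is principal, let p be a prime number whose image in A lies in the maximal ideal of A, and suppose that A admits a surjective ring homomorphism onto a nonzero ring of characteristic zero. Then A is an integral domain and a discrete valuation ring. -/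
/-!
Write the maximal ideal as `(π)`. By Krull's intersection theorem every nonzero `x` has finite
`π`-adic multiplicity `n`, and then `x = π ^ n * u` with `u` a unit, since `u ∈ 𝔪 = (π)` would
make `π ^ (n + 1)` divide `x`. Hence a product of nonzero elements is associated to a power of
`π`, so `A` is a domain as soon as `π` is not nilpotent. A ring map to a ring of characteristic zero
forces `A` to have characteristic zero, so `p` is not nilpotent, and neither is `π`, which
divides it.
-/

open IsLocalRing

namespace IsLocalRing

variable {A : Type*} [CommRing A] [IsNoetherianRing A] [IsLocalRing A]

theorem finiteMultiplicity_of_not_isUnit {π x : A} (hπ : ¬IsUnit π) (hx : x ≠ 0) :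
    FiniteMultiplicity π x := by
  by_contra h
  rw [FiniteMultiplicity.not_iff_forall] at h
  have hx_mem : x ∈ ⨅ n : ℕ, Ideal.span {π} ^ n :=
    Ideal.mem_iInf.mpr fun n => by
      rw [Ideal.span_singleton_pow, Ideal.mem_span_singleton]
      exact h n
  rw [Ideal.iInf_pow_eq_bot_of_isLocalRing _ (mt Ideal.span_singleton_eq_top.mp hπ),
    Ideal.mem_bot] at hx_mem
  exact hx hx_mem

theorem exists_associated_pow_of_maximalIdeal_eq_span {π x : A}
    (hπ : maximalIdeal A = Ideal.span {π}) (hx : x ≠ 0) : ∃ n : ℕ, Associated (π ^ n) x := by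
  have hπ_nonunit : ¬IsUnit π :=
    (mem_maximalIdeal π).mp (hπ ▸ Ideal.mem_span_singleton_self π)
  obtain ⟨u, hxu, hπu⟩ :=
    (finiteMultiplicity_of_not_isUnit hπ_nonunit hx).exists_eq_pow_mul_and_not_dvd
  have hu : IsUnit u := by
    by_contra hu
    exact hπu (Ideal.mem_span_singleton.mp (hπ ▸ (mem_maximalIdeal u).mpr hu))
  exact ⟨_, hu.unit, hxu.symm⟩

theorem isDomain_of_maximalIdeal_eq_span {π : A} (hπ : maximalIdeal A = Ideal.span {π})
    (hπ_nil : ¬IsNilpotent π) : IsDomain A := by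
  have : NoZeroDivisors A := by
    refine ⟨fun {x y} hxy => ?_⟩
    by_contra! hne
    obtain ⟨m, hm⟩ := exists_associated_pow_of_maximalIdeal_eq_span hπ hne.1
    obtain ⟨n, hn⟩ := exists_associated_pow_of_maximalIdeal_eq_span hπ hne.2
    have hmn : Associated (π ^ (m + n)) (x * y) := pow_add π m n ▸ hm.mul_mul hn
    exact hπ_nil ⟨m + n, hmn.eq_zero_iff.mpr hxy⟩
  exact NoZeroDivisors.to_isDomain A

end IsLocalRing

theorem stmt_6_general {A : Type*} [CommRing A] [IsNoetherianRing A] [IsLocalRing A]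
    (hprin : (IsLocalRing.maximalIdeal A).IsPrincipal)
    (p : ℕ) (hp : p.Prime) (hpA : (p : A) ∈ IsLocalRing.maximalIdeal A)
    (B : Type*) [CommRing B] [CharZero B]
    (f : A →+* B) :
    IsDomain A ∧ IsPrincipalIdealRing A ∧ ¬ IsField A := by
  obtain ⟨π, hπ⟩ := hprin
  have : CharZero A := f.charZero
  have hp_nil : ¬IsNilpotent (p : A) := fun ⟨n, hn⟩ =>
    pow_ne_zero n hp.ne_zero (by exact_mod_cast hn)
  have hπ_nil : ¬IsNilpotent π := by
    obtain ⟨c, hc⟩ := Ideal.mem_span_singleton.mp (hπ ▸ hpA)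
    exact fun h => hp_nil (hc ▸ (Commute.all π c).isNilpotent_mul_right h)
  have := isDomain_of_maximalIdeal_eq_span hπ hπ_nil
  have hnf : ¬IsField A := by
    rw [isField_iff_maximalIdeal_eq, hπ, Ideal.submodule_span_eq, Ideal.span_singleton_eq_bot]
    exact fun h => hπ_nil (h ▸ IsNilpotent.zero)
  have : IsDiscreteValuationRing A :=
    ((IsDiscreteValuationRing.TFAE A hnf).out 4 0).mp (⟨π, hπ⟩ : (maximalIdeal A).IsPrincipal)
  exact ⟨‹_›, inferInstance, hnf⟩

/-- Let `A` be a noetherian local ring whose maximal ideal is principal,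
let `p` be a prime number whose image in `A` lies in the maximal ideal, and suppose `A`
admits a surjective ring homomorphism onto a nonzero ring of characteristic zero.
Then `A` is an integral domain and a discrete valuation ring (a local principal ideal
domain that is not a field). -/
theorem stmt_6 {A : Type*} [CommRing A] [IsNoetherianRing A] [IsLocalRing A]
    (hprin : (IsLocalRing.maximalIdeal A).IsPrincipal)
    (p : ℕ) (hp : p.Prime) (hpA : (p : A) ∈ IsLocalRing.maximalIdeal A)
    (B : Type*) [CommRing B] [Nontrivial B] [CharZero B]
    (f : A →+* B) (hf : Function.Surjective f) :
    IsDomain A ∧ IsPrincipalIdealRing A ∧ ¬ IsField A :=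
  stmt_6_general hprin p hp hpA B f
end

section
/- Let p be a prime, let R be a noetherian local ring with maximal ideal m whose residue field R/m is isomorphic to 𝔽_p = ℤ/pℤ, and let I be a proper ideal of R. Then I is maximal (i.e. I = m) if and only if there exists neither a surjective ring homomorphism R/I → 𝔽_p[x]/(x²) nor a surjective ring homomorphism R/I → ℤ/p²ℤ. -/
open IsLocalRing Ideal Polynomial

/-! If `I ⊊ m`, the noetherian hypothesis gives an ideal `J ⊇ I` covered by `m`, and Nakayama's
lemma forces `m² ⊆ J`. So `R ⧸ J` is a local ring with residue field `𝔽_p` whose maximal ideal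
is principal, nonzero and square-zero: it has `p²` elements and its characteristic, which
divides `p²`, is `p` or `p²`; accordingly it is `𝔽_p[x]/(x²)` or `ℤ/p²ℤ`. Conversely,
`R ⧸ m ≅ 𝔽_p` is too small to surject onto a ring with `p²` elements. -/

theorem AdjoinRoot.natCard_eq_pow_natDegree {R : Type*} [CommRing R] {f : R[X]} (hf : f.Monic) :
    Nat.card (AdjoinRoot f) = Nat.card R ^ f.natDegree := by
  rw [Nat.card_congr (AdjoinRoot.powerBasis' hf).basis.equivFun.toEquiv, Nat.card_fun,
    Nat.card_fin, AdjoinRoot.powerBasis'_dim]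

theorem Polynomial.natCard_quotient_span_X_sq (K : Type*) [CommRing K] [Nontrivial K] :
    Nat.card (K[X] ⧸ span {(X : K[X]) ^ 2}) = Nat.card K ^ 2 := by
  have h := AdjoinRoot.natCard_eq_pow_natDegree (monic_X_pow (R := K) 2)
  rwa [natDegree_X_pow] at h

theorem Ideal.exists_intCast_sub_mem_of_ringEquiv_zmod {S : Type*} [CommRing S] {n : Ideal S}
    {p : ℕ} (e : S ⧸ n ≃+* ZMod p) (s : S) : ∃ c : ℤ, s - c ∈ n := by
  obtain ⟨c, hc⟩ := ZMod.intCast_surjective (e (Ideal.Quotient.mk n s))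
  exact ⟨c, Ideal.Quotient.eq_zero_iff_mem.mp (e.injective (by simp [hc]))⟩

theorem Ideal.natCast_mem_of_ringEquiv_zmod {S : Type*} [CommRing S] {n : Ideal S}
    {p : ℕ} (e : S ⧸ n ≃+* ZMod p) : (p : S) ∈ n :=
  Ideal.Quotient.eq_zero_iff_mem.mp (e.injective (by simp))

section CharP

variable {S : Type*} [CommRing S] {p : ℕ} [Fact p.Prime]

theorem nonempty_ringEquiv_zmod_of_charP {n : ℕ} [NeZero n] [CharP S n]
    (hcard : Nat.card S = n) : Nonempty (ZMod n ≃+* S) := by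
  have : Finite S := Nat.finite_of_card_ne_zero (hcard ▸ NeZero.ne n)
  let := Fintype.ofFinite S
  exact ⟨ZMod.ringEquiv S (by rw [← Nat.card_eq_fintype_card, hcard])⟩

theorem nonempty_ringEquiv_quotient_span_X_sq_of_charP [CharP S p] {τ : S}
    (hcard : Nat.card S = p ^ 2) (hgen : ∀ s : S, ∃ c d : ℤ, s = c + d * τ) (hτ2 : τ ^ 2 = 0) :
    Nonempty ((ZMod p)[X] ⧸ span {(X : (ZMod p)[X]) ^ 2} ≃+* S) := by
  let φ : AdjoinRoot (X ^ 2 : (ZMod p)[X]) →+* S :=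
    AdjoinRoot.lift (ZMod.castHom dvd_rfl S) τ (by simp [hτ2])
  have hsurj : Function.Surjective φ := by
    intro s
    obtain ⟨c, d, rfl⟩ := hgen s
    exact ⟨Int.cast c + Int.cast d * AdjoinRoot.root (X ^ 2 : (ZMod p)[X]), by simp [φ]⟩
  have hcardA := natCard_quotient_span_X_sq (ZMod p)
  rw [Nat.card_zmod] at hcardA
  have : Finite (AdjoinRoot (X ^ 2 : (ZMod p)[X])) :=
    Nat.finite_of_card_ne_zero (hcardA ▸ NeZero.ne (p ^ 2))
  exact ⟨RingEquiv.ofBijective φ (hsurj.bijective_of_nat_card_le (hcard ▸ hcardA.le))⟩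

end CharP

namespace IsLocalRing

section SquareZero

variable {S : Type*} [CommRing S] [IsLocalRing S] {τ : S}

theorem natCard_eq_sq_of_maximalIdeal_eq_span (hm : maximalIdeal S = span {τ}) (hτ : τ ≠ 0)
    (hτ2 : τ ^ 2 = 0) : Nat.card S = Nat.card (S ⧸ maximalIdeal S) ^ 2 := by
  set f := LinearMap.toSpanSingleton S S τ
  have hker : LinearMap.ker f = maximalIdeal S := by
    ext s
    simp only [LinearMap.mem_ker, LinearMap.toSpanSingleton_apply, smul_eq_mul, f]
    refine ⟨fun hs => ?_, fun hs => ?_⟩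
    · by_contra hsm
      exact hτ ((notMem_maximalIdeal.mp hsm).mul_right_eq_zero.mp hs)
    · obtain ⟨r, rfl⟩ := mem_span_singleton'.mp (hm ▸ hs)
      rw [mul_assoc, ← sq, hτ2, mul_zero]
  have hrange : LinearMap.range f = maximalIdeal S := by
    rw [hm]
    exact (LinearMap.span_singleton_eq_range S S τ).symm
  have hcard := Nat.card_congr f.quotKerEquivRange.toEquiv
  rw [hker, hrange] at hcard
  rw [Submodule.card_eq_card_quotient_mul_card (maximalIdeal S), ← hcard, sq]

variable {p : ℕ}

theorem exists_eq_intCast_add_intCast_mul (e : S ⧸ maximalIdeal S ≃+* ZMod p)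
    (hm : maximalIdeal S = span {τ}) (hτ2 : τ ^ 2 = 0) (s : S) : ∃ c d : ℤ, s = c + d * τ := by
  obtain ⟨c, hc⟩ := exists_intCast_sub_mem_of_ringEquiv_zmod e s
  obtain ⟨r, hr⟩ := mem_span_singleton'.mp (hm ▸ hc)
  obtain ⟨d, hd⟩ := exists_intCast_sub_mem_of_ringEquiv_zmod e r
  obtain ⟨u, hu⟩ := mem_span_singleton'.mp (hm ▸ hd)
  exact ⟨c, d, by linear_combination -hr - τ * hu + u * hτ2⟩

theorem nonempty_ringEquiv_of_maximalIdeal_eq_span [Fact p.Prime]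
    (e : S ⧸ maximalIdeal S ≃+* ZMod p) (hm : maximalIdeal S = span {τ}) (hτ : τ ≠ 0)
    (hτ2 : τ ^ 2 = 0) :
    Nonempty ((ZMod p)[X] ⧸ span {(X : (ZMod p)[X]) ^ 2} ≃+* S) ∨
      Nonempty (ZMod (p ^ 2) ≃+* S) := by
  have hcard : Nat.card S = p ^ 2 := by
    rw [natCard_eq_sq_of_maximalIdeal_eq_span hm hτ hτ2, Nat.card_congr e.toEquiv, Nat.card_zmod]
  have hp_sq : ((p ^ 2 : ℕ) : S) = 0 := by
    obtain ⟨r, hr⟩ := mem_span_singleton'.mp (hm ▸ Ideal.natCast_mem_of_ringEquiv_zmod e)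
    rw [Nat.cast_pow, ← hr, mul_pow, hτ2, mul_zero]
  obtain ⟨k, hk, hchar⟩ := (Nat.dvd_prime_pow Fact.out).mp (ringChar.dvd hp_sq)
  interval_cases k
  · exact absurd (hchar.trans (pow_zero p)) CharP.ringChar_ne_one
  · have := ringChar.of_eq (hchar.trans (pow_one p))
    exact .inl (nonempty_ringEquiv_quotient_span_X_sq_of_charP hcard
      (exists_eq_intCast_add_intCast_mul e hm hτ2) hτ2)
  · have := ringChar.of_eq hchar
    exact .inr (nonempty_ringEquiv_zmod_of_charP hcard)

end SquareZero

theorem sq_maximalIdeal_le_of_covBy {R : Type*} [CommRing R] [IsLocalRing R]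
    [IsNoetherianRing R] {J : Ideal R} (hJ : J ⋖ maximalIdeal R) : maximalIdeal R ^ 2 ≤ J := by
  rcases hJ.eq_or_eq (le_sup_left : J ≤ J ⊔ maximalIdeal R ^ 2)
    (sup_le hJ.le (pow_le_self two_ne_zero)) with h | h
  · exact le_sup_right.trans h.le
  · refine absurd (Submodule.le_of_le_smul_of_le_jacobson_bot (IsNoetherian.noetherian _)
      (maximalIdeal_le_jacobson ⊥) ?_) hJ.lt.not_ge
    rw [smul_eq_mul, ← sq, h]

theorem nonempty_ringEquiv_quotient_of_covBy {R : Type*} [CommRing R] [IsLocalRing R]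
    [IsNoetherianRing R] {p : ℕ} [Fact p.Prime] (e : R ⧸ maximalIdeal R ≃+* ZMod p)
    {J : Ideal R} (hJ : J ⋖ maximalIdeal R) :
    Nonempty ((ZMod p)[X] ⧸ span {(X : (ZMod p)[X]) ^ 2} ≃+* R ⧸ J) ∨
      Nonempty (ZMod (p ^ 2) ≃+* R ⧸ J) := by
  obtain ⟨t, htm, htJ⟩ := SetLike.exists_of_lt hJ.lt
  have hspan : J ⊔ span {t} = maximalIdeal R :=
    (hJ.eq_or_eq le_sup_left (sup_le hJ.le (span_singleton_le_iff_mem _ |>.mpr htm))).resolve_left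
      fun h => htJ (h ▸ mem_sup_right (mem_span_singleton_self t))
  have : Nontrivial (R ⧸ J) := Ideal.Quotient.nontrivial_iff.mpr (ne_top_of_lt hJ.lt)
  have : IsLocalRing (R ⧸ J) :=
    .of_surjective' (Ideal.Quotient.mk J) Ideal.Quotient.mk_surjective
  have hmap : maximalIdeal (R ⧸ J) = (maximalIdeal R).map (Ideal.Quotient.mk J) :=
    (map_maximalIdeal_of_surjective _ Ideal.Quotient.mk_surjective).symm
  refine nonempty_ringEquiv_of_maximalIdeal_eq_span (τ := Ideal.Quotient.mk J t)
    ((quotEquivOfEq hmap).trans ((DoubleQuot.quotQuotEquivQuotOfLE hJ.le).trans e)) ?_ ?_ ?_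
  · rw [hmap, ← hspan, Ideal.map_sup, map_quotient_self, bot_sup_eq, map_span,
      Set.image_singleton]
  · rwa [Ne, Ideal.Quotient.eq_zero_iff_mem]
  · rw [← map_pow, Ideal.Quotient.eq_zero_iff_mem]
    exact sq_maximalIdeal_le_of_covBy hJ (pow_mem_pow htm 2)

end IsLocalRing

/-- Let `p` be prime, `R` a noetherian local ring with residue field
`R/m ≅ 𝔽_p`, and `I` a proper ideal of `R`.  Then `I` is maximal (i.e. `I = m`) if and
only if there exists neither a surjective ring homomorphism `R/I → 𝔽_p[x]/(x²)` nor a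
surjective ring homomorphism `R/I → ℤ/p²ℤ`. -/
theorem stmt_7 {R : Type*} [CommRing R] [IsNoetherianRing R] [IsLocalRing R]
    (p : ℕ) (hp : p.Prime)
    (e : (R ⧸ IsLocalRing.maximalIdeal R) ≃+* ZMod p)
    (I : Ideal R) (hI : I ≠ ⊤) :
    I = IsLocalRing.maximalIdeal R ↔
      (¬ ∃ f : R ⧸ I →+*
          (Polynomial (ZMod p) ⧸ (Ideal.span {(Polynomial.X : Polynomial (ZMod p)) ^ 2})),
        Function.Surjective f) ∧
      (¬ ∃ f : R ⧸ I →+* ZMod (p ^ 2), Function.Surjective f) := by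
  have := Fact.mk hp
  constructor
  · rintro rfl
    have : Finite (R ⧸ maximalIdeal R) := .of_equiv _ e.symm.toEquiv
    have hlt : Nat.card (R ⧸ maximalIdeal R) < p ^ 2 := by
      rw [Nat.card_congr e.toEquiv, Nat.card_zmod]
      exact lt_self_pow₀ hp.one_lt one_lt_two
    refine ⟨fun ⟨f, hf⟩ => ?_, fun ⟨f, hf⟩ => ?_⟩
    · refine (Nat.card_le_card_of_surjective f hf).not_gt ?_
      rwa [natCard_quotient_span_X_sq, Nat.card_zmod]
    · exact (Nat.card_le_card_of_surjective f hf).not_gt (by rwa [Nat.card_zmod])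
  · rintro ⟨hA, hZ⟩
    by_contra hIm
    obtain ⟨J, hIJ, hJ⟩ := exists_le_covBy_of_lt (lt_of_le_of_ne (le_maximalIdeal hI) hIm)
    have surj_of_equiv : ∀ {A : Type} [CommRing A], (A ≃+* R ⧸ J) →
        ∃ f : R ⧸ I →+* A, Function.Surjective f := fun φ =>
      ⟨φ.symm.toRingHom.comp (Ideal.Quotient.factor hIJ),
        φ.symm.surjective.comp (Ideal.Quotient.factor_surjective hIJ)⟩
    rcases nonempty_ringEquiv_quotient_of_covBy e hJ with ⟨⟨φ⟩⟩ | ⟨⟨φ⟩⟩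
    exacts [hA (surj_of_equiv φ), hZ (surj_of_equiv φ)]
end

section
/- Let p be a prime and n ≥ 2 an integer. Let R be a discrete valuation ring that is complete with respect to its maximal-ideal-adic topology, and suppose there exists a surjective ring homomorphism R → ℤ/pⁿℤ. Then R is isomorphic as a ring to the ring ℤ_p of p-adic integers. (Equivalently: the only complete discrete valuation ring admitting a surjection onto ℤ/pⁿℤ for some n ≥ 2 is ℤ_p.) -/
/-! Because `p ∉ (p²)` in `ℤ/pⁿℤ` for `n ≥ 2`, the surjection `f` forces `p ∉ 𝔪²`, so `p` is a
uniformizer of `R`, and `f` shows that every element of `R` is an integer modulo `𝔪 = pR`.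
Completeness of `R` yields a ring map `ℤ_p → R`; it is injective since `p` is not nilpotent in
`R`, and surjective by the complete Nakayama lemma, since it is onto modulo `p`. -/

open IsLocalRing Ideal

namespace ZMod

variable {p d : ℕ}

theorem natCast_dvd_of_not_isUnit (hp : p.Prime) (hd : 0 < d) {y : ZMod (p ^ d)}
    (hy : ¬IsUnit y) : (p : ZMod (p ^ d)) ∣ y := by
  have : NeZero (p ^ d) := ⟨pow_ne_zero d hp.ne_zero⟩
  rw [← natCast_zmod_val y, isUnit_natCast_iff_not_dvd_pow hp hd, not_not] at hy
  obtain ⟨c, hc⟩ := hy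
  exact ⟨c, by rw [← natCast_zmod_val y, hc, Nat.cast_mul]⟩

theorem not_sq_dvd_natCast (hp : p.Prime) (hd : 2 ≤ d) :
    ¬(p : ZMod (p ^ d)) ^ 2 ∣ p := by
  intro h
  have h2 := map_dvd (castHom (pow_dvd_pow p hd) (ZMod (p ^ 2))) h
  rw [map_pow, map_natCast, ← Nat.cast_pow, natCast_self, zero_dvd_iff,
    natCast_eq_zero_iff] at h2
  exact absurd (Nat.le_of_dvd hp.pos h2) (by nlinarith [hp.two_le])

end ZMod

theorem IsLocalRing.exists_intCast_sub_mem_maximalIdeal {R : Type*} [CommRing R] [IsLocalRing R]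
    {m : ℕ} [Nontrivial (ZMod m)] (f : R →+* ZMod m) (x : R) :
    ∃ a : ℤ, x - a ∈ maximalIdeal R := by
  refine ⟨(f x).cast, le_maximalIdeal (RingHom.ker_ne_top f) ?_⟩
  rw [RingHom.mem_ker, map_sub, map_intCast, ZMod.intCast_zmod_cast, sub_self]

namespace IsDiscreteValuationRing

variable {R : Type*} [CommRing R] [IsDomain R] [IsDiscreteValuationRing R]

theorem irreducible_natCast_of_surjective {p n : ℕ} (hp : p.Prime) (hn : 2 ≤ n)
    (f : R →+* ZMod (p ^ n)) (hf : Function.Surjective f) : Irreducible (p : R) := by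
  have : Nontrivial (ZMod (p ^ n)) :=
    ZMod.nontrivial_iff.2 (Nat.one_lt_pow (by omega) hp.one_lt).ne'
  have : IsLocalHom f := IsLocalHom.of_surjective f hf
  have hfp : f p = p := map_natCast f p
  have hp0 : (p : R) ≠ 0 := fun h =>
    ZMod.not_sq_dvd_natCast hp hn (by rw [← hfp, h, map_zero]; exact dvd_zero _)
  obtain ⟨π, hπ⟩ := exists_irreducible R
  have hπp : (p : ZMod (p ^ n)) ∣ f π :=
    ZMod.natCast_dvd_of_not_isUnit hp (by omega) fun h => hπ.not_isUnit (isUnit_of_map_unit f π h)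
  obtain ⟨k, u, hk⟩ := eq_unit_mul_pow_irreducible hp0 hπ
  match k, hk with
  | 0, hk =>
    refine absurd ?_ (ZMod.prime_natCast_not_isUnit_pow hp (d := n) (by omega))
    rw [← hfp, hk, pow_zero, mul_one]
    exact u.isUnit.map f
  | 1, hk =>
    rw [hk, pow_one]
    exact (irreducible_units_mul u).2 hπ
  | k + 2, hk =>
    have hsq : (p : ZMod (p ^ n)) ^ 2 ∣ f p := by
      rw [hk, map_mul, map_pow]
      exact dvd_mul_of_dvd_right ((pow_dvd_pow_of_dvd hπp 2).trans (pow_dvd_pow _ (by omega))) _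
    exact absurd (hfp ▸ hsq) (ZMod.not_sq_dvd_natCast hp hn)

end IsDiscreteValuationRing

namespace PadicInt

variable {p : ℕ} [Fact p.Prime] {S : Type*} [CommRing S]

theorem nonempty_ringHom_of_isAdicComplete (I : Ideal S) [IsAdicComplete I S]
    (hp : (p : S) ∈ I) : Nonempty (ℤ_[p] →+* S) := by
  have hpk (k : ℕ) : ((p ^ k : ℕ) : S ⧸ I ^ k) = 0 := by
    rw [← map_natCast (Ideal.Quotient.mk _), Ideal.Quotient.eq_zero_iff_mem, Nat.cast_pow]
    exact pow_mem_pow hp k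
  let g (k : ℕ) : ZMod (p ^ k) →+* S ⧸ I ^ k := ZMod.castHom (ringChar.dvd (hpk k)) _
  refine ⟨IsAdicComplete.liftRingHom I (fun k => (g k).comp (toZModPow (p := p) k))
    fun {m n} hle => ?_⟩
  rw [← zmod_cast_comp_toZModPow (p := p) m n hle, ← RingHom.comp_assoc, ← RingHom.comp_assoc]
  exact congrArg (fun φ : ZMod (p ^ n) →+* S ⧸ I ^ m => φ.comp (toZModPow n))
    (RingHom.ext_zmod _ _)

theorem ringHom_injective_of_not_isNilpotent (ψ : ℤ_[p] →+* S) (hp : ¬IsNilpotent (p : S)) :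
    Function.Injective ψ := by
  rw [RingHom.injective_iff_ker_eq_bot]
  by_contra hker
  obtain ⟨j, hj⟩ := ideal_eq_span_pow_p hker
  have : (p : ℤ_[p]) ^ j ∈ RingHom.ker ψ := hj ▸ mem_span_singleton_self _
  exact hp ⟨j, by rwa [RingHom.mem_ker, map_pow, map_natCast] at this⟩

theorem ringHom_surjective_of_isHausdorff (ψ : ℤ_[p] →+* S) [IsHausdorff (span {(p : S)}) S]
    (h : ∀ x : S, ∃ a : ℤ, x - a ∈ span {(p : S)}) : Function.Surjective ψ := by
  have hmap : (maximalIdeal ℤ_[p]).map ψ = span {(p : S)} := by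
    rw [maximalIdeal_eq_span_p, map_span, Set.image_singleton, map_natCast]
  have : IsHausdorff ((maximalIdeal ℤ_[p]).map ψ) S := hmap ▸ inferInstance
  refine surjective_of_mk_map_comp_surjective (I := maximalIdeal ℤ_[p]) ψ fun y => ?_
  obtain ⟨x, rfl⟩ := Ideal.Quotient.mk_surjective y
  obtain ⟨a, ha⟩ := h x
  refine ⟨a, ?_⟩
  rwa [RingHom.comp_apply, map_intCast, eq_comm, Ideal.Quotient.mk_eq_mk_iff_sub_mem, hmap]

end PadicInt

/-- Let `p` be prime and `n ≥ 2`.  Let `R` be a discrete valuation ring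
which is complete with respect to its maximal-ideal-adic topology, and suppose there is a
surjective ring homomorphism `R → ℤ/pⁿℤ`.  Then `R` is isomorphic, as a ring, to the ring
`ℤ_p` of `p`-adic integers. -/
theorem stmt_8 (p : ℕ) [Fact p.Prime] (n : ℕ) (hn : 2 ≤ n)
    {R : Type*} [CommRing R] [IsDomain R] [IsDiscreteValuationRing R]
    [IsAdicComplete (IsLocalRing.maximalIdeal R) R]
    (f : R →+* ZMod (p ^ n)) (hf : Function.Surjective f) :
    Nonempty (R ≃+* ℤ_[p]) := by
  have hp : p.Prime := Fact.out
  have : Fact (1 < p ^ n) := ⟨Nat.one_lt_pow (by omega) hp.one_lt⟩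
  have hpR : Irreducible (p : R) :=
    IsDiscreteValuationRing.irreducible_natCast_of_surjective hp hn f hf
  have hmax : maximalIdeal R = span {(p : R)} := hpR.maximalIdeal_eq
  have : IsHausdorff (span {(p : R)}) R := hmax ▸ IsAdicComplete.toIsHausdorff
  obtain ⟨ψ⟩ := PadicInt.nonempty_ringHom_of_isAdicComplete (p := p) (maximalIdeal R)
    (hmax ▸ mem_span_singleton_self _)
  have hinj : Function.Injective ψ :=
    PadicInt.ringHom_injective_of_not_isNilpotent ψ
      (by rw [isNilpotent_iff_eq_zero]; exact hpR.ne_zero)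
  have hsurj : Function.Surjective ψ :=
    PadicInt.ringHom_surjective_of_isHausdorff ψ fun x =>
      hmax ▸ exists_intCast_sub_mem_maximalIdeal f x
  exact ⟨(RingEquiv.ofBijective ψ ⟨hinj, hsurj⟩).symm⟩
end

section
/- Let p be a prime, let R and T be commutative rings, and let f : R → T be a surjective ring homomorphism. Suppose that: (a) T has no p-torsion, i.e. p·t = 0 implies t = 0 for t ∈ T; (b) the induced map R/pR → T/pT is injective (hence an isomorphism); and (c) R is p-adically separated, i.e. the intersection of the ideals pⁿR over all n ≥ 0 is zero. Then f is injective, hence an isomorphism R ≅ T. -/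
/-!
By (b) every `x ∈ ker f` is `p * s`, and by (a) `f s = 0`, so `ker f ⊆ p • ker f`.
Iterating puts `ker f` inside every `pⁿR`, which is zero by (c).
-/

open Ideal

section

variable {R T : Type*} [CommRing R] [CommRing T] (f : R →+* T)

theorem Ideal.comap_le_of_injective_quotientMap {I : Ideal R} {J : Ideal T}
    (hIJ : I ≤ J.comap f) (h : Function.Injective (quotientMap J f hIJ)) : J.comap f ≤ I := by
  intro x hx
  rw [← Quotient.eq_zero_iff_mem]
  exact h (by rwa [quotientMap_mk, map_zero, Quotient.eq_zero_iff_mem])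

theorem RingHom.ker_le_span_singleton_pow {a : R} (ha : ∀ t : T, f a * t = 0 → t = 0)
    (hker : RingHom.ker f ≤ span {a}) (n : ℕ) : RingHom.ker f ≤ span {a} ^ n := by
  induction n with
  | zero => simp
  | succ n ih =>
    intro x hx
    obtain ⟨s, rfl⟩ := mem_span_singleton.mp (hker hx)
    have hs : s ∈ RingHom.ker f := ha _ (by rwa [RingHom.mem_ker, map_mul] at hx)
    rw [pow_succ']
    exact mul_mem_mul (mem_span_singleton_self a) (ih hs)

theorem RingHom.injective_of_ker_le_span_singleton {a : R} (ha : ∀ t : T, f a * t = 0 → t = 0)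
    (hker : RingHom.ker f ≤ span {a}) (hsep : ⨅ n : ℕ, span {a} ^ n = ⊥) :
    Function.Injective f := by
  rw [RingHom.injective_iff_ker_eq_bot, eq_bot_iff, ← hsep]
  exact le_iInf (f.ker_le_span_singleton_pow ha hker)

end

/-- Let `p` be prime and `f : R → T` a surjective ring homomorphism of
commutative rings.  Suppose (a) `T` has no `p`-torsion; (b) the induced map
`R/pR → T/pT` is injective; (c) `R` is `p`-adically separated (`⋂ₙ pⁿR = 0`).
Then `f` is injective, hence an isomorphism. -/
theorem stmt_9 {R T : Type*} [CommRing R] [CommRing T] (p : ℕ)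
    (f : R →+* T) (hf : Function.Surjective f)
    (htor : ∀ t : T, (p : T) * t = 0 → t = 0)
    (hinj : Function.Injective
      (Ideal.quotientMap (I := Ideal.span {(p : R)}) (Ideal.span {(p : T)}) f
        (by
          rw [Ideal.span_le]
          intro x hx
          rw [Set.mem_singleton_iff] at hx
          subst hx
          rw [SetLike.mem_coe, Ideal.mem_comap, map_natCast]
          exact Ideal.subset_span (Set.mem_singleton _))))
    (hsep : (⨅ n : ℕ, (Ideal.span {(p : R)}) ^ n) = ⊥) :
    Function.Injective f ∧ Nonempty (R ≃+* T) := by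
  have hker : RingHom.ker f ≤ span {(p : R)} :=
    (comap_mono bot_le).trans (comap_le_of_injective_quotientMap f _ hinj)
  have hf_inj : Function.Injective f :=
    f.injective_of_ker_le_span_singleton (by simpa using htor) hker hsep
  exact ⟨hf_inj, ⟨RingEquiv.ofBijective f ⟨hf_inj, hf⟩⟩⟩
end

section
/- Let p be a prime and e ≥ 1 an integer. Let I be an ideal of the power series ring ℤ_p[[X]] such that the quotient ℤ_p[[X]]/I has no p-torsion (p·t = 0 implies t = 0 in the quotient) and such that the image of I under the coefficientwise reduction map ℤ_p[[X]] → 𝔽_p[[X]] is the ideal (Xᵉ). Then I is a principal ideal generated by a monic polynomial f ∈ ℤ_p[X] of degree e all of whose coefficients below the leading one are divisible by p (so f ≡ Xᵉ mod p), and consequently ℤ_p[[X]]/I ≅ ℤ_p[X]/(f) is a free ℤ_p-module of rank e. -/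
/-!
Lift `Xᵉ` to some `g ∈ I`. The hypothesis on the image of `I` gives `I ⊆ (g) + p·ℤ_p[[X]]`, and
since `ℤ_p[[X]]/I` has no `p`-torsion, `p·y ∈ I` forces `y ∈ I`; hence `I = (g) + p·I`, and
Nakayama's lemma in the noetherian local ring `ℤ_p[[X]]` gives `I = (g)`. By Weierstrass
preparation `g = f·u` with `u` a unit and `f` a distinguished polynomial whose degree is the order
of `g mod p`, namely `e`. So `I = (f)`, and `ℤ_p[[X]]/(f) ≅ ℤ_p[X]/(f)` is free of rank `e`.
-/

open PowerSeries Ideal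

theorem Ideal.le_of_le_sup_span_singleton_of_mul_mem {R : Type*} [CommRing R] {I J : Ideal R}
    {π : R} (hI : I.FG) (hπ : π ∈ jacobson ⊥) (hJI : J ≤ I) (hIJ : I ≤ J ⊔ span {π})
    (hπI : ∀ x, π * x ∈ I → x ∈ I) : I ≤ J := by
  refine Submodule.le_of_le_smul_of_le_jacobson_bot hI ((span_singleton_le_iff_mem _).2 hπ) ?_
  intro x hx
  obtain ⟨j, hj, y, hy, rfl⟩ := Submodule.mem_sup.1 (hIJ hx)
  obtain ⟨z, rfl⟩ := mem_span_singleton.1 hy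
  have hz : z ∈ I := hπI z (by simpa using I.sub_mem hx (hJI hj))
  exact Submodule.add_mem_sup hj (Submodule.smul_mem_smul (mem_span_singleton_self π) hz)

theorem PowerSeries.mem_span_C_of_forall_dvd_coeff {A : Type*} [CommSemiring A] {π : A}
    {a : A⟦X⟧} (h : ∀ i, π ∣ coeff i a) : a ∈ span {C π} := by
  choose b hb using h
  exact mem_span_singleton'.2 ⟨mk b, by ext i; simp [hb, mul_comm]⟩

namespace PadicInt

variable {p : ℕ} [Fact p.Prime]

theorem natCast_mem_jacobson_bot_powerSeries : (p : ℤ_[p]⟦X⟧) ∈ jacobson ⊥ := by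
  rw [IsLocalRing.jacobson_eq_maximalIdeal ⊥ bot_ne_top, IsLocalRing.mem_maximalIdeal,
    mem_nonunits_iff, isUnit_iff_constantCoeff, map_natCast]
  exact p_nonunit

theorem ker_map_toZMod :
    RingHom.ker (PowerSeries.map (toZMod (p := p))) = span {(p : ℤ_[p]⟦X⟧)} := by
  refine le_antisymm (fun a ha ↦ ?_) ((span_singleton_le_iff_mem _).2 ?_)
  · rw [← map_natCast (C (R := ℤ_[p]))]
    refine mem_span_C_of_forall_dvd_coeff fun i ↦ mem_span_singleton.1 ?_
    rw [← maximalIdeal_eq_span_p, ← ker_toZMod, RingHom.mem_ker, ← coeff_map,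
      RingHom.mem_ker.1 ha, map_zero]
  · rw [RingHom.mem_ker, map_natCast, ← map_natCast (C (R := ZMod p)), ZMod.natCast_self,
      map_zero]

theorem map_residue_eq_X_pow {g : ℤ_[p]⟦X⟧} {e : ℕ} (hg : g.map (toZMod (p := p)) = X ^ e) :
    g.map (IsLocalRing.residue ℤ_[p]) = X ^ e := by
  have : IsLocalRing.residue ℤ_[p] = residueField.symm.toRingHom.comp (toZMod (p := p)) := by
    ext x; simp [toZMod_eq_residueField_comp_residue]
  rw [this, map_comp, RingHom.comp_apply, hg, map_pow, map_X]

theorem eq_span_singleton_of_map_eq_span_map {I : Ideal ℤ_[p]⟦X⟧} {g : ℤ_[p]⟦X⟧} (hgI : g ∈ I)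
    (hpI : ∀ x, (p : ℤ_[p]⟦X⟧) * x ∈ I → x ∈ I)
    (himg : I.map (PowerSeries.map (toZMod (p := p))) = span {g.map toZMod}) :
    I = span {g} := by
  have hsurj := map_surjective _ (ZMod.ringHom_surjective (toZMod (p := p)))
  have hker : I ⊔ RingHom.ker (PowerSeries.map toZMod) = span {g} ⊔ span {(p : ℤ_[p]⟦X⟧)} := by
    rw [← ker_map_toZMod, ← map_eq_iff_sup_ker_eq_of_surjective _ hsurj, himg, map_span,
      Set.image_singleton]
  have hgI' := (span_singleton_le_iff_mem I).2 hgI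
  exact le_antisymm (le_of_le_sup_span_singleton_of_mul_mem (IsNoetherian.noetherian I)
    natCast_mem_jacobson_bot_powerSeries hgI' (hker ▸ le_sup_left) hpI) hgI'

end PadicInt

open PadicInt in
theorem stmt_10_general (p : ℕ) [Fact p.Prime] (e : ℕ)
    (I : Ideal (PowerSeries ℤ_[p]))
    (htor : ∀ t : PowerSeries ℤ_[p] ⧸ I, (p : PowerSeries ℤ_[p] ⧸ I) * t = 0 → t = 0)
    (himg : Ideal.map (PowerSeries.map (PadicInt.toZMod (p := p))) I
      = Ideal.span {(PowerSeries.X : PowerSeries (ZMod p)) ^ e}) :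
    ∃ f : Polynomial ℤ_[p], f.Monic ∧ f.natDegree = e ∧
      (∀ i < e, (p : ℤ_[p]) ∣ f.coeff i) ∧
      I = Ideal.span {(f : PowerSeries ℤ_[p])} ∧
      Module.Free ℤ_[p] (PowerSeries ℤ_[p] ⧸ I) ∧
      Module.finrank ℤ_[p] (PowerSeries ℤ_[p] ⧸ I) = e := by
  obtain ⟨g, hgI, hg⟩ := (mem_map_iff_of_surjective _
    (map_surjective _ (ZMod.ringHom_surjective toZMod))).1 (himg ▸ mem_span_singleton_self (X ^ e))
  have hpI (x : ℤ_[p]⟦X⟧) (hx : (p : ℤ_[p]⟦X⟧) * x ∈ I) : x ∈ I := by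
    rw [← Ideal.Quotient.eq_zero_iff_mem] at hx ⊢
    exact htor _ (by rwa [← map_natCast (Ideal.Quotient.mk I), ← map_mul])
  obtain ⟨f, _, H⟩ := exists_isWeierstrassFactorization (g := g)
    (by rw [map_residue_eq_X_pow hg]; exact pow_ne_zero _ X_ne_zero)
  have hIf : I = span {(f : ℤ_[p]⟦X⟧)} := by
    rw [eq_span_singleton_of_map_eq_span_map hgI hpI (by rw [himg, hg]), H.eq_mul,
      span_singleton_mul_right_unit H.isUnit]
  have hdeg : f.natDegree = e := by
    rw [H.natDegree_eq_toNat_order_map, map_residue_eq_X_pow hg, order_X_pow]; rfl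
  have hmonic := H.isDistinguishedAt.monic
  have := hmonic.free_quotient
  let E := (H.isDistinguishedAt.algEquivQuotient.trans
    (quotientEquivAlgOfEq ℤ_[p] hIf.symm)).toLinearEquiv
  refine ⟨f, hmonic, hdeg, fun i hi ↦ ?_, hIf, .of_equiv E, ?_⟩
  · rw [← mem_span_singleton, ← maximalIdeal_eq_span_p]
    exact H.isDistinguishedAt.mem (hdeg ▸ hi)
  · rw [← E.finrank_eq, finrank_quotient_span_eq_natDegree' hmonic, hdeg]

/-- Let `p` be prime and `e ≥ 1`. Let `I` be an ideal of `ℤ_p[[X]]` such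
that `ℤ_p[[X]]/I` has no `p`-torsion and the image of `I` under coefficientwise reduction
`ℤ_p[[X]] → 𝔽_p[[X]]` is the ideal `(Xᵉ)`.  Then `I` is principal, generated by a monic
polynomial `f` of degree `e` with `f ≡ Xᵉ (mod p)`, and `ℤ_p[[X]]/I` is a free `ℤ_p`-module
of rank `e`. -/
theorem stmt_10 (p : ℕ) [Fact p.Prime] (e : ℕ) (he : 1 ≤ e)
    (I : Ideal (PowerSeries ℤ_[p]))
    (htor : ∀ t : PowerSeries ℤ_[p] ⧸ I, (p : PowerSeries ℤ_[p] ⧸ I) * t = 0 → t = 0)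
    (himg : Ideal.map (PowerSeries.map (PadicInt.toZMod (p := p))) I
      = Ideal.span {(PowerSeries.X : PowerSeries (ZMod p)) ^ e}) :
    ∃ f : Polynomial ℤ_[p], f.Monic ∧ f.natDegree = e ∧
      (∀ i < e, (p : ℤ_[p]) ∣ f.coeff i) ∧
      I = Ideal.span {(f : PowerSeries ℤ_[p])} ∧
      Module.Free ℤ_[p] (PowerSeries ℤ_[p] ⧸ I) ∧
      Module.finrank ℤ_[p] (PowerSeries ℤ_[p] ⧸ I) = e :=
  stmt_10_general p e I htor himg
end

section
/- Let p be an odd prime and e ≥ 1 an integer. In the polynomial ring ℚ[u], define sequences (Xₙ) and (Yₙ) by X₀ = uᵉ, X_{n+1} = Xₙᵖ/p, and Y₀ = uᵉ + p, Y_{n+1} = Yₙᵖ/p (so that Xₙ = u^{epⁿ}/p^{vₙ} and Yₙ = (uᵉ+p)^{pⁿ}/p^{vₙ}, where vₙ = v_p(pⁿ!) = (pⁿ−1)/(p−1)). Then for every n ≥ 0 there exists g in the subring ℤ[X₀, X₁, X₂, …] of ℚ[u] generated over ℤ by all the Xᵢ such that Yₙ − Xₙ − p·∏_{i=0}^{n−1}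 Xᵢ^{p−1} = p²·g. In other words, Yₙ ≡ Xₙ + p·∏_{i=0}^{n−1} Xᵢ^{p−1} modulo p² times the ℤ-subalgebra generated by the Xᵢ. -/
/-!
Write `Yₙ = Xₙ + p·bₙ` with `bₙ ≡ ∏_{i<n} Xᵢ^(p-1)` modulo `p²`. For odd `p` one has
`(a + p b)ᵖ ≡ aᵖ + p² a^(p-1) b (mod p³)` in any commutative ring (the `k = p - 2` binomial term
carries `C(p, 2) = p (p-1)/2`, which is divisible by `p` exactly because `p` is odd). Raising to
the `p`-th power and dividing by `p` therefore gives `Yₙ₊₁ ≡ Xₙ₊₁ + p·Xₙ^(p-1)·bₙ (mod p²)`,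
which is the induction step.
-/

open Finset

theorem cube_dvd_add_mul_pow_sub {R : Type*} [CommRing R] {p : ℕ} (hp : Odd p) (a b : R) :
    (p : R) ^ 3 ∣ (a + p * b) ^ p - a ^ p - p ^ 2 * (a ^ (p - 1) * b) := by
  obtain ⟨t, ht⟩ := odd_sq_dvd_geom_sum₂_sub a b hp
  refine ⟨b * t, ?_⟩
  linear_combination (-1 : R) * geom_sum₂_mul (a + p * b) a p + (p * b) * ht

theorem Subring.exists_add_mul_pow_eq {R : Type*} [CommRing R] (S : Subring R) {p : ℕ}
    (hp : Odd p) {a b : R} (ha : a ∈ S) (hb : b ∈ S) :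
    ∃ c ∈ S, (a + p * b) ^ p = a ^ p + p ^ 2 * (a ^ (p - 1) * b) + p ^ 3 * c := by
  obtain ⟨c, hc⟩ := cube_dvd_add_mul_pow_sub hp (⟨a, ha⟩ : S) ⟨b, hb⟩
  refine ⟨c, c.2, ?_⟩
  have := congrArg Subtype.val hc
  push_cast at this
  linear_combination this

theorem exists_sub_sub_mul_prod_eq_sq_mul {R : Type*} [CommRing R] (S : Subring R) {p : ℕ}
    (hp : Odd p) (hreg : IsLeftRegular (p : R)) (X Y : ℕ → R) (hXS : ∀ n, X n ∈ S)
    (hX : ∀ n, p * X (n + 1) = X n ^ p) (hY : ∀ n, p * Y (n + 1) = Y n ^ p)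
    (hY0 : Y 0 = X 0 + p) (n : ℕ) :
    ∃ g ∈ S, Y n - X n - p * ∏ i ∈ range n, X i ^ (p - 1) = p ^ 2 * g := by
  induction n with
  | zero => exact ⟨0, S.zero_mem, by simp [hY0]⟩
  | succ n ih =>
    obtain ⟨g, hgS, hg⟩ := ih
    set P := ∏ i ∈ range n, X i ^ (p - 1)
    have hPS : P ∈ S := prod_mem fun i _ => pow_mem (hXS i) _
    obtain ⟨c, hcS, hc⟩ := S.exists_add_mul_pow_eq hp (hXS n)
      (add_mem hPS (mul_mem (natCast_mem S p) hgS))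
    refine ⟨X n ^ (p - 1) * g + c, add_mem (mul_mem (pow_mem (hXS n) _) hgS) hcS, hreg ?_⟩
    have hYn : Y n = X n + p * (P + p * g) := by linear_combination hg
    dsimp only
    rw [prod_range_succ, mul_sub, mul_sub, hY, hX, hYn, hc]
    ring

theorem stmt_12_general (p : ℕ) (hodd : Odd p) (e : ℕ)
    (X Y : ℕ → Polynomial ℚ)
    (hX0 : X 0 = Polynomial.X ^ e)
    (hXs : ∀ n, X (n + 1) = Polynomial.C ((p : ℚ)⁻¹) * X n ^ p)
    (hY0 : Y 0 = Polynomial.X ^ e + Polynomial.C (p : ℚ))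
    (hYs : ∀ n, Y (n + 1) = Polynomial.C ((p : ℚ)⁻¹) * Y n ^ p) :
    ∀ n : ℕ, ∃ g ∈ Algebra.adjoin ℤ (Set.range X),
      Y n - X n - (p : Polynomial ℚ) * ∏ i ∈ Finset.range n, X i ^ (p - 1)
        = (p : Polynomial ℚ) ^ 2 * g := by
  have hp : (p : ℚ) ≠ 0 := Nat.cast_ne_zero.mpr hodd.pos.ne'
  have hpC : (p : Polynomial ℚ) = Polynomial.C (p : ℚ) := (map_natCast _ p).symm
  have hdiv (Z : ℕ → Polynomial ℚ) (hZ : ∀ n, Z (n + 1) = Polynomial.C ((p : ℚ)⁻¹) * Z n ^ p)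
      (n : ℕ) : (p : Polynomial ℚ) * Z (n + 1) = Z n ^ p := by
    rw [hZ, hpC, ← mul_assoc, ← Polynomial.C_mul, mul_inv_cancel₀ hp, Polynomial.C_1, one_mul]
  exact exists_sub_sub_mul_prod_eq_sq_mul (Algebra.adjoin ℤ (Set.range X)).toSubring hodd
    (hpC ▸ (Polynomial.isUnit_C.mpr hp.isUnit).isRegular.left) X Y
    (fun i => Algebra.subset_adjoin ⟨i, rfl⟩) (hdiv X hXs) (hdiv Y hYs) (by rw [hY0, hX0, hpC])

/-- Let `p` be an odd prime and `e ≥ 1`.  In `ℚ[u]` define `X₀ = uᵉ`,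
`X_{n+1} = Xₙᵖ/p`, `Y₀ = uᵉ + p`, `Y_{n+1} = Yₙᵖ/p`.  Then for every `n` one has
`Yₙ ≡ Xₙ + p·∏_{i<n} Xᵢ^(p-1)` modulo `p²` times the subring `ℤ[X₀, X₁, …]` of `ℚ[u]`
generated over `ℤ` by the `Xᵢ`. -/
theorem stmt_12 (p : ℕ) (hp : p.Prime) (hodd : Odd p) (e : ℕ) (he : 1 ≤ e)
    (X Y : ℕ → Polynomial ℚ)
    (hX0 : X 0 = Polynomial.X ^ e)
    (hXs : ∀ n, X (n + 1) = Polynomial.C ((p : ℚ)⁻¹) * X n ^ p)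
    (hY0 : Y 0 = Polynomial.X ^ e + Polynomial.C (p : ℚ))
    (hYs : ∀ n, Y (n + 1) = Polynomial.C ((p : ℚ)⁻¹) * Y n ^ p) :
    ∀ n : ℕ, ∃ g ∈ Algebra.adjoin ℤ (Set.range X),
      Y n - X n - (p : Polynomial ℚ) * ∏ i ∈ Finset.range n, X i ^ (p - 1)
        = (p : Polynomial ℚ) ^ 2 * g :=
  stmt_12_general p hodd e X Y hX0 hXs hY0 hYs
end

section
/- Let S be a commutative ring, let p be a prime number with image p ∈ S, and let 0 → S/pS → M → S/pS → 0 be a short exact sequence of S-modules (i.e. an injective S-linear map S/pS → M and a surjective S-linear map M → S/pS whose kernel is the image of the first map). Then M is generated by two elements e₁, e₂ with p·e₁ = 0 and p·e₂ = η·e₁ for some η ∈ S; more precisely, there exists η ∈ S and an S-module isomorphism M ≅ (S ⊕ S)/N, where N is the submodule of S ⊕ S generated by (p, 0) and (−η, p). -/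
/-!
Take `e₁ := ι 1` and a lift `e₂` of `1` along `π`. Since `π (p • e₂) = 0`, exactness gives
`p • e₂ = η • e₁` for some `η`, and `e₁, e₂` generate `M` because every element differs from
a multiple of `e₂` by an element of `range ι = S ∙ e₁`. For the relations: if
`a • e₁ + b • e₂ = 0`, applying `π` gives `b = c * p`; then `(a + c * η) • e₁ = 0`, so
injectivity of `ι` gives `a + c * η = d * p`, i.e. `(a, b) = d • (p, 0) + c • (-η, p)`.
-/

section QuotientDomain

variable {R M : Type*} [CommRing R] [AddCommGroup M] [Module R M] {I : Ideal R}

theorem Ideal.Quotient.mk_eq_smul_one (s : R) : Ideal.Quotient.mk I s = s • 1 := by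
  rw [← Ideal.Quotient.algebraMap_eq, Algebra.algebraMap_eq_smul_one]

theorem LinearMap.map_quotient_mk (f : R ⧸ I →ₗ[R] M) (s : R) :
    f (Ideal.Quotient.mk I s) = s • f 1 := by
  rw [Ideal.Quotient.mk_eq_smul_one, map_smul]

theorem LinearMap.range_eq_span_map_one (f : R ⧸ I →ₗ[R] M) :
    LinearMap.range f = R ∙ f 1 := by
  ext m
  rw [LinearMap.mem_range, Submodule.mem_span_singleton]
  constructor
  · rintro ⟨x, rfl⟩
    obtain ⟨s, rfl⟩ := Ideal.Quotient.mk_surjective x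
    exact ⟨s, (f.map_quotient_mk s).symm⟩
  · rintro ⟨s, rfl⟩
    exact ⟨_, f.map_quotient_mk s⟩

theorem LinearMap.smul_map_one_eq_zero_of_mem (f : R ⧸ I →ₗ[R] M) {s : R} (hs : s ∈ I) :
    s • f 1 = 0 := by
  rw [← f.map_quotient_mk, Ideal.Quotient.eq_zero_iff_mem.mpr hs, map_zero]

theorem LinearMap.smul_map_one_eq_zero_iff {f : R ⧸ I →ₗ[R] M} (hf : Function.Injective f)
    {s : R} : s • f 1 = 0 ↔ s ∈ I := by
  rw [← f.map_quotient_mk, ← map_zero f, hf.eq_iff, Ideal.Quotient.eq_zero_iff_mem]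

end QuotientDomain

theorem LinearMap.range_coprod_toSpanSingleton {R M : Type*} [Semiring R] [AddCommMonoid M]
    [Module R M] (x y : M) :
    LinearMap.range ((LinearMap.toSpanSingleton R M x).coprod (LinearMap.toSpanSingleton R M y)) =
      Submodule.span R {x, y} := by
  rw [LinearMap.range_coprod, ← LinearMap.span_singleton_eq_range,
    ← LinearMap.span_singleton_eq_range, Submodule.span_insert]

section CyclicExtension

variable {S M : Type*} [CommRing S] [AddCommGroup M] [Module S M] {r : S}
  {ι : S ⧸ Ideal.span {r} →ₗ[S] M} {π : M →ₗ[S] S ⧸ Ideal.span {r}} {e₂ : M}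

theorem mem_ker_iff_exists_smul_map_one (hexact : LinearMap.range ι = LinearMap.ker π) {m : M} :
    m ∈ LinearMap.ker π ↔ ∃ s : S, s • ι 1 = m := by
  rw [← hexact, ι.range_eq_span_map_one, Submodule.mem_span_singleton]

theorem map_smul_of_map_eq_one (he₂ : π e₂ = 1) (s : S) :
    π (s • e₂) = Ideal.Quotient.mk _ s := by
  rw [map_smul, he₂, Ideal.Quotient.mk_eq_smul_one]

theorem exists_smul_eq_smul_map_one (hexact : LinearMap.range ι = LinearMap.ker π)
    (he₂ : π e₂ = 1) : ∃ η : S, r • e₂ = η • ι 1 := by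
  have hker : r • e₂ ∈ LinearMap.ker π := by
    rw [LinearMap.mem_ker, map_smul_of_map_eq_one he₂, Ideal.Quotient.mk_singleton_self]
  obtain ⟨η, hη⟩ := (mem_ker_iff_exists_smul_map_one hexact).mp hker
  exact ⟨η, hη.symm⟩

theorem span_map_one_pair_eq_top (hexact : LinearMap.range ι = LinearMap.ker π)
    (he₂ : π e₂ = 1) : Submodule.span S {ι 1, e₂} = ⊤ := by
  refine eq_top_iff.mpr fun m _ => ?_
  obtain ⟨s, hs⟩ := Ideal.Quotient.mk_surjective (π m)
  have hker : m - s • e₂ ∈ LinearMap.ker π := by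
    rw [LinearMap.mem_ker, map_sub, map_smul_of_map_eq_one he₂, hs, sub_self]
  obtain ⟨t, ht⟩ := (mem_ker_iff_exists_smul_map_one hexact).mp hker
  exact Submodule.mem_span_pair.mpr ⟨t, s, by rw [ht, sub_add_cancel]⟩

theorem ker_coprod_toSpanSingleton_eq_span_pair (hι : Function.Injective ι)
    (hexact : LinearMap.range ι = LinearMap.ker π) (he₂ : π e₂ = 1) {η : S}
    (hη : r • e₂ = η • ι 1) :
    LinearMap.ker
        ((LinearMap.toSpanSingleton S M (ι 1)).coprod (LinearMap.toSpanSingleton S M e₂)) =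
      Submodule.span S {(r, 0), (-η, r)} := by
  apply le_antisymm
  · rintro ⟨a, b⟩ hab
    simp only [LinearMap.mem_ker, LinearMap.coprod_apply,
      LinearMap.toSpanSingleton_apply] at hab
    have hπe₁ : π (ι 1) = 0 :=
      (mem_ker_iff_exists_smul_map_one hexact).mpr ⟨1, one_smul _ _⟩
    have hb : b ∈ Ideal.span {r} := by
      have := congrArg π hab
      rwa [map_add, map_smul, hπe₁, smul_zero, zero_add, map_smul_of_map_eq_one he₂, map_zero,
        Ideal.Quotient.eq_zero_iff_mem] at this
    obtain ⟨c, rfl⟩ := Ideal.mem_span_singleton'.mp hb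
    have ha : a + c * η ∈ Ideal.span {r} := by
      rw [← LinearMap.smul_map_one_eq_zero_iff hι, add_smul, mul_smul, ← hη, ← mul_smul, hab]
    obtain ⟨d, hd⟩ := Ideal.mem_span_singleton'.mp ha
    refine Submodule.mem_span_pair.mpr ⟨d, c, Prod.ext ?_ ?_⟩
    · simp only [Prod.fst_add, Prod.smul_fst, smul_eq_mul]
      linear_combination hd
    · simp only [Prod.snd_add, Prod.smul_snd, smul_eq_mul, mul_zero, zero_add]
  · rw [Submodule.span_le]
    rintro z (rfl | rfl) <;>
      simp only [SetLike.mem_coe, LinearMap.mem_ker, LinearMap.coprod_apply,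
        LinearMap.toSpanSingleton_apply]
    · rw [ι.smul_map_one_eq_zero_of_mem (Ideal.mem_span_singleton_self r), zero_smul, add_zero]
    · rw [hη, neg_smul, neg_add_cancel]

end CyclicExtension

theorem stmt_15_general {S : Type*} [CommRing S] (p : ℕ)
    {M : Type*} [AddCommGroup M] [Module S M]
    (ι : (S ⧸ Ideal.span {(p : S)}) →ₗ[S] M)
    (π : M →ₗ[S] S ⧸ Ideal.span {(p : S)})
    (hι : Function.Injective ι) (hπ : Function.Surjective π)
    (hexact : LinearMap.range ι = LinearMap.ker π) :
    ∃ (η : S) (e₁ e₂ : M),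
      Submodule.span S {e₁, e₂} = ⊤ ∧
      (p : S) • e₁ = 0 ∧ (p : S) • e₂ = η • e₁ ∧
      Nonempty (M ≃ₗ[S]
        (S × S) ⧸ Submodule.span S {((p : S), (0 : S)), (-η, (p : S))}) := by
  obtain ⟨e₂, he₂⟩ := hπ 1
  obtain ⟨η, hη⟩ := exists_smul_eq_smul_map_one hexact he₂
  have hspan := span_map_one_pair_eq_top hexact he₂
  set φ := (LinearMap.toSpanSingleton S M (ι 1)).coprod (LinearMap.toSpanSingleton S M e₂)
  have hφ : Function.Surjective φ := by
    rw [← LinearMap.range_eq_top, LinearMap.range_coprod_toSpanSingleton, hspan]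
  have hker := ker_coprod_toSpanSingleton_eq_span_pair hι hexact he₂ hη
  exact ⟨η, ι 1, e₂, hspan, ι.smul_map_one_eq_zero_of_mem (Ideal.mem_span_singleton_self _),
    hη, ⟨(φ.quotKerEquivOfSurjective hφ).symm.trans (Submodule.quotEquivOfEq _ _ hker)⟩⟩

/-- Let `S` be a commutative ring, `p` a prime with image `p ∈ S`, and
`0 → S/pS → M → S/pS → 0` a short exact sequence of `S`-modules.  Then `M` is generated
by two elements `e₁, e₂` with `p·e₁ = 0` and `p·e₂ = η·e₁` for some `η ∈ S`; more
precisely, `M ≅ (S ⊕ S)/N` where `N` is generated by `(p, 0)` and `(-η, p)`. -/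
theorem stmt_15 {S : Type*} [CommRing S] (p : ℕ) (hp : p.Prime)
    {M : Type*} [AddCommGroup M] [Module S M]
    (ι : (S ⧸ Ideal.span {(p : S)}) →ₗ[S] M)
    (π : M →ₗ[S] S ⧸ Ideal.span {(p : S)})
    (hι : Function.Injective ι) (hπ : Function.Surjective π)
    (hexact : LinearMap.range ι = LinearMap.ker π) :
    ∃ (η : S) (e₁ e₂ : M),
      Submodule.span S {e₁, e₂} = ⊤ ∧
      (p : S) • e₁ = 0 ∧ (p : S) • e₂ = η • e₁ ∧
      Nonempty (M ≃ₗ[S]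
        (S × S) ⧸ Submodule.span S {((p : S), (0 : S)), (-η, (p : S))}) :=
  stmt_15_general p ι π hι hπ hexact
end

section
/- Let p be a prime, F a field of characteristic p, and a, b nonzero elements of F. Let d ∈ ℤ, and let γ : ℤ → F be a function with finite support such that: (a) γ(k) = 0 for all k < 0; (b) γ(k) = 0 whenever p does not divide k; and (c) b·γ(pk) = a·γ(k + d)^p for every k ∈ ℤ. Then either γ is identically zero, or there exist m ∈ ℕ and a nonzero c ∈ F such that d = m·(p − 1), b = a·c^{p−1} (so that a/b is a (p−1)-st power in Fˣ), and γ(pm) = c while γ(j) = 0 for every j ≠ pm. In particular, if d is not a nonnegative multiple of p − 1, then γ = 0. -/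
/-!
Relation (c) with `a ≠ 0` shows that `t ↦ p (t - d)` maps the support of `γ` into itself.
This map multiplies distances by `p > 1`, and a finite set carried into itself by an expanding
map has at most one point (compare the images of its minimum and maximum). If `γ ≠ 0`, its
support is a single point `M` with `p (M - d) = M`; by (a) and (b), `M = p m` with `m ≥ 0`, so
`d = m (p - 1)`, and (c) at `k = m` reads `b c = a c ^ p` for `c = γ M`.
-/

open Function Set

theorem Set.Finite.subsingleton_of_mapsTo_of_expanding {α : Type*} [AddCommGroup α]
    [LinearOrder α] [IsOrderedAddMonoid α] {S : Set α} (hS : S.Finite) {f : α → α}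
    (hf : MapsTo f S S) (hexp : ∀ x ∈ S, ∀ y ∈ S, x < y → y - x < f y - f x) :
    S.Subsingleton := by
  rcases S.eq_empty_or_nonempty with rfl | hne
  · exact subsingleton_empty
  obtain ⟨m, hmS, hm⟩ := S.exists_min_image id hS hne
  obtain ⟨M, hMS, hM⟩ := S.exists_max_image id hS hne
  have hmM : m = M := (hm M hMS).eq_of_not_lt fun hlt =>
    (sub_le_sub (hM (f M) (hf hMS)) (hm (f m) (hf hmS))).not_gt (hexp m hmS M hMS hlt)
  have hpt : ∀ x ∈ S, x = m := fun x hx => le_antisymm ((hM x hx).trans hmM.ge) (hm x hx)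
  exact fun x hx y hy => (hpt x hx).trans (hpt y hy).symm

theorem mapsTo_support_of_mul_eq_mul_pow {F : Type*} [MonoidWithZero F] [NoZeroDivisors F]
    {a b : F} (ha : a ≠ 0) {n : ℕ} {d : ℤ} {γ : ℤ → F}
    (h : ∀ k : ℤ, b * γ (n * k) = a * γ (k + d) ^ n) :
    MapsTo (fun t => n * (t - d)) (support γ) (support γ) := by
  intro t ht hzero
  have := h (t - d)
  rw [sub_add_cancel, hzero, mul_zero] at this
  exact mul_ne_zero ha (pow_ne_zero _ ht) this.symm

theorem stmt_16_general (p : ℕ) (hp : p.Prime) {F : Type*} [Field F]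
    (a b : F) (ha : a ≠ 0)
    (d : ℤ) (γ : ℤ → F) (hfin : (Function.support γ).Finite)
    (h0 : ∀ k : ℤ, k < 0 → γ k = 0)
    (h1 : ∀ k : ℤ, ¬ ((p : ℤ) ∣ k) → γ k = 0)
    (h2 : ∀ k : ℤ, b * γ ((p : ℤ) * k) = a * (γ (k + d)) ^ p) :
    (γ = 0 ∨ ∃ (m : ℕ) (c : F), c ≠ 0 ∧ d = (m : ℤ) * ((p : ℤ) - 1) ∧
      b = a * c ^ (p - 1) ∧ γ ((p : ℤ) * m) = c ∧
      ∀ j : ℤ, j ≠ (p : ℤ) * m → γ j = 0) ∧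
    ((¬ ∃ m : ℕ, d = (m : ℤ) * ((p : ℤ) - 1)) → γ = 0) := by
  have hp1 : (1 : ℤ) < p := by exact_mod_cast hp.one_lt
  have hmaps := mapsTo_support_of_mul_eq_mul_pow ha h2
  have hsub : (support γ).Subsingleton :=
    hfin.subsingleton_of_mapsTo_of_expanding hmaps fun x _ y _ hxy => by nlinarith
  have main : γ = 0 ∨ ∃ (m : ℕ) (c : F), c ≠ 0 ∧ d = (m : ℤ) * ((p : ℤ) - 1) ∧
      b = a * c ^ (p - 1) ∧ γ ((p : ℤ) * m) = c ∧ ∀ j : ℤ, j ≠ (p : ℤ) * m → γ j = 0 := by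
    refine or_iff_not_imp_left.2 fun hγ => ?_
    obtain ⟨M, hM⟩ := Function.ne_iff.1 hγ
    have hfix : p * (M - d) = M := hsub (hmaps hM) hM
    obtain ⟨k, rfl⟩ : (p : ℤ) ∣ M := not_imp_comm.1 (h1 M) hM
    have hk : 0 ≤ k := nonneg_of_mul_nonneg_right (not_lt.1 (mt (h0 _) hM)) (by omega)
    lift k to ℕ using hk
    have hd : d = k * (p - 1) :=
      mul_left_cancel₀ (by omega : (p : ℤ) ≠ 0) (by linear_combination -hfix)
    have hbc : b * γ (p * k) = a * γ (p * k) ^ p := by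
      rw [h2 k, hd]; ring_nf
    refine ⟨k, γ (p * k), hM, hd, mul_right_cancel₀ hM ?_, rfl, fun j hj => ?_⟩
    · rw [hbc, mul_assoc, ← pow_succ, Nat.sub_add_cancel hp.one_le]
    · exact not_not.1 fun hj' => hj (hsub hj' hM)
  refine ⟨main, fun hd => main.resolve_right ?_⟩
  rintro ⟨m, -, -, hm, -⟩
  exact hd ⟨m, hm⟩

/-- Let `p` be prime, `F` a field of characteristic `p`, and `a, b`
nonzero elements of `F`.  Let `d ∈ ℤ` and let `γ : ℤ → F` have finite support with
(a) `γ k = 0` for `k < 0`; (b) `γ k = 0` when `p ∤ k`; (c) `b·γ(pk) = a·γ(k+d)^p` for all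
`k`.  Then either `γ = 0`, or there are `m ∈ ℕ` and `c ≠ 0` in `F` with `d = m(p-1)`,
`b = a·c^(p-1)`, `γ(pm) = c` and `γ j = 0` for all `j ≠ pm`.  In particular, if `d` is
not a nonnegative multiple of `p - 1`, then `γ = 0`. -/
theorem stmt_16 (p : ℕ) (hp : p.Prime) {F : Type*} [Field F] [CharP F p]
    (a b : F) (ha : a ≠ 0) (hb : b ≠ 0)
    (d : ℤ) (γ : ℤ → F) (hfin : (Function.support γ).Finite)
    (h0 : ∀ k : ℤ, k < 0 → γ k = 0)
    (h1 : ∀ k : ℤ, ¬ ((p : ℤ) ∣ k) → γ k = 0)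
    (h2 : ∀ k : ℤ, b * γ ((p : ℤ) * k) = a * (γ (k + d)) ^ p) :
    (γ = 0 ∨ ∃ (m : ℕ) (c : F), c ≠ 0 ∧ d = (m : ℤ) * ((p : ℤ) - 1) ∧
      b = a * c ^ (p - 1) ∧ γ ((p : ℤ) * m) = c ∧
      ∀ j : ℤ, j ≠ (p : ℤ) * m → γ j = 0) ∧
    ((¬ ∃ m : ℕ, d = (m : ℤ) * ((p : ℤ) - 1)) → γ = 0) :=
  stmt_16_general p hp a b ha d γ hfin h0 h1 h2
end
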